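/- arXiv:2503.00288 — 6 statements merged into one kernel-verified Lean document; each statement's English description precedes it below -/
import Mathlib

section
/- For any real number x with 0 < x < 1 and positive integers n and r, the series Φ(x, -r, n) := ∑_{k=0}^∞ (n+k)^r x^k converges and satisfies |Φ(x, -r, n)| ≤ (3nr)^r · r! / (1-x)^(r+1). -/
/-- For `0 < x < 1` and positive integers `n`, `r`, the series
`Φ(x, -r, n) = ∑_{k≥0} (n+k)^r x^k` converges and
`|Φ(x,-r,n)| ≤ (3nr)^r · r! / (1-x)^(r+1)`. -/
theorem stmt_0 (x : ℝ) (hx0 : 0 < x) (hx1 : x < 1) (n r : ℕ) (hn : 0 < n) (hr : 0 < r) :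
    Summable (fun k : ℕ => ((n : ℝ) + k) ^ r * x ^ k) ∧
    |∑' k : ℕ, ((n : ℝ) + k) ^ r * x ^ k| ≤
      ((3 * n * r : ℕ) : ℝ) ^ r * (Nat.factorial r) / (1 - x) ^ (r + 1) := by
  have hxnorm : ‖x‖ < 1 := by rw [Real.norm_eq_abs, abs_of_pos hx0]; exact hx1
  have hn1 : (1 : ℝ) ≤ n := by exact_mod_cast hn
  have hr1 : (1 : ℝ) ≤ r := by exact_mod_cast hr
  -- the comparison series
  have hsumg : Summable (fun k : ℕ => ((k + r).choose r : ℝ) * x ^ k) :=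
    summable_choose_mul_geometric_of_norm_lt_one r hxnorm
  set C : ℝ := ((n * r : ℕ) : ℝ) ^ r * (Nat.factorial r) with hC
  have hCnonneg : 0 ≤ C := by positivity
  have hsumG : Summable (fun k : ℕ => C * (((k + r).choose r : ℝ) * x ^ k)) :=
    hsumg.mul_left C
  have hfnonneg : ∀ k : ℕ, 0 ≤ ((n : ℝ) + k) ^ r * x ^ k := by
    intro k; positivity
  -- pointwise bound
  have hle : ∀ k : ℕ, ((n : ℝ) + k) ^ r * x ^ k ≤ C * (((k + r).choose r : ℝ) * x ^ k) := by
    intro k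
    have h1 : ((n : ℝ) + k) ≤ (n : ℝ) * r * (k + 1) := by
      have hk : (0 : ℝ) ≤ k := Nat.cast_nonneg k
      have hnr : (1 : ℝ) ≤ (n : ℝ) * r := by nlinarith
      nlinarith [mul_nonneg hk (sub_nonneg.mpr hnr)]
    have h2 : ((n : ℝ) + k) ^ r ≤ ((n : ℝ) * r) ^ r * ((k : ℝ) + 1) ^ r := by
      calc ((n : ℝ) + k) ^ r ≤ ((n : ℝ) * r * (k + 1)) ^ r := by
            apply pow_le_pow_left₀ (by positivity) h1
        _ = ((n : ℝ) * r) ^ r * ((k : ℝ) + 1) ^ r := mul_pow _ _ _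
    have h3 : ((k : ℝ) + 1) ^ r ≤ (Nat.factorial r : ℝ) * ((k + r).choose r : ℝ) := by
      have := Nat.pow_le_choose (α := ℝ) r (k + r)
      have hsub : k + r + 1 - r = k + 1 := by omega
      rw [hsub] at this
      rw [div_le_iff₀ (by positivity)] at this
      calc ((k : ℝ) + 1) ^ r = ((k + 1 : ℕ) : ℝ) ^ r := by push_cast; ring
        _ ≤ ((k + r).choose r : ℝ) * (Nat.factorial r : ℝ) := this
        _ = (Nat.factorial r : ℝ) * ((k + r).choose r : ℝ) := mul_comm _ _
    have h4 : ((n : ℝ) + k) ^ r ≤ C * ((k + r).choose r : ℝ) := by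
      calc ((n : ℝ) + k) ^ r ≤ ((n : ℝ) * r) ^ r * ((k : ℝ) + 1) ^ r := h2
        _ ≤ ((n : ℝ) * r) ^ r * ((Nat.factorial r : ℝ) * ((k + r).choose r : ℝ)) := by
            apply mul_le_mul_of_nonneg_left h3 (by positivity)
        _ = C * ((k + r).choose r : ℝ) := by rw [hC]; push_cast; ring
    calc ((n : ℝ) + k) ^ r * x ^ k ≤ (C * ((k + r).choose r : ℝ)) * x ^ k :=
          mul_le_mul_of_nonneg_right h4 (by positivity)
      _ = C * (((k + r).choose r : ℝ) * x ^ k) := by ring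
  have hsumf : Summable (fun k : ℕ => ((n : ℝ) + k) ^ r * x ^ k) :=
    Summable.of_nonneg_of_le hfnonneg hle hsumG
  refine ⟨hsumf, ?_⟩
  have htsum_g : ∑' k : ℕ, ((k + r).choose r : ℝ) * x ^ k = 1 / (1 - x) ^ (r + 1) :=
    tsum_choose_mul_geometric_of_norm_lt_one r hxnorm
  have hbound : ∑' k : ℕ, ((n : ℝ) + k) ^ r * x ^ k ≤ C / (1 - x) ^ (r + 1) := by
    calc ∑' k : ℕ, ((n : ℝ) + k) ^ r * x ^ k
        ≤ ∑' k : ℕ, C * (((k + r).choose r : ℝ) * x ^ k) := Summable.tsum_le_tsum hle hsumf hsumG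
      _ = C * ∑' k : ℕ, ((k + r).choose r : ℝ) * x ^ k := tsum_mul_left
      _ = C * (1 / (1 - x) ^ (r + 1)) := by rw [htsum_g]
      _ = C / (1 - x) ^ (r + 1) := by ring
  have habs : |∑' k : ℕ, ((n : ℝ) + k) ^ r * x ^ k| = ∑' k : ℕ, ((n : ℝ) + k) ^ r * x ^ k :=
    abs_of_nonneg (tsum_nonneg hfnonneg)
  rw [habs]
  refine hbound.trans ?_
  rw [hC]
  gcongr
  all_goals first
    | exact pow_pos (by linarith : (0:ℝ) < 1 - x) _
    | exact (pow_pos (by linarith : (0:ℝ) < 1 - x) _).le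
    | exact Nat.cast_le.mpr (Nat.le_mul_of_pos_left n (by norm_num))
end

section
/- Let q be a prime power and π_q(n) the number of monic irreducible polynomials of degree n in F_q[t]. Then for all n ≥ 1, π_q(n) ≥ q^n/n − q^(n/2)/n − q^(n/3). -/
open Polynomial

theorem key_count (F : Type) [Field F] [Fintype F] (q : ℕ) (hq : Fintype.card F = q)
    (n : ℕ) (hn : 1 ≤ n) :
    q ^ n ≤ (∑ d ∈ n.properDivisors, q ^ d) +
      n * Nat.card {P : F[X] // P.Monic ∧ Irreducible P ∧ P.natDegree = n} := by
  classical
  set gp : F[X] := X ^ q ^ n - X with hgp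
  set E := SplittingField gp with hE
  haveI : Finite E := Module.finite_of_finite F
  haveI : Fintype E := Fintype.ofFinite E
  have hq2 : 2 ≤ q := hq ▸ Fintype.one_lt_card
  obtain ⟨p, hp⟩ := CharP.exists F
  haveI : CharP F p := hp
  obtain ⟨k, hpp, hqk⟩ := FiniteField.card F p
  haveI := Fact.mk hpp
  haveI : CharP E p := charP_of_injective_algebraMap (algebraMap F E).injective p
  have hpq : p ∣ q ^ n := (hq ▸ hqk ▸ dvd_pow_self p k.ne_zero).trans (dvd_pow_self q (by omega))
  have hsep : gp.Separable := galois_poly_separable p (q ^ n) hpq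
  have hgne : gp ≠ 0 := FiniteField.X_pow_card_pow_sub_X_ne_zero F (by omega) hq2
  have hdeg : gp.natDegree = q ^ n := FiniteField.X_pow_card_pow_sub_X_natDegree_eq F (by omega) hq2
  have key : Fintype.card (gp.rootSet E) = q ^ n := by
    rw [card_rootSet_eq_natDegree hsep (SplittingField.splits gp), hdeg]
  have hmem : ∀ x : E, x ∈ gp.rootSet E ↔ x ^ q ^ n = x := by
    intro x
    rw [mem_rootSet_of_ne hgne]
    simp only [hgp, map_sub, map_pow, aeval_X, sub_eq_zero]
  have huniv : gp.rootSet E = Set.univ := by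
    rw [Set.eq_univ_iff_forall]
    intro x
    have hx : x ∈ (⊤ : Subalgebra F E) := trivial
    rw [← SplittingField.adjoin_rootSet, Algebra.mem_adjoin_iff] at hx
    haveI : ExpChar E p := ExpChar.prime hpp
    have hqp : q = p ^ (k : ℕ) := by rw [← hq, hqk]
    have hqn : q ^ n = p ^ ((k : ℕ) * n) := by rw [hqp, ← pow_mul]
    set R : Subring E := RingHom.eqLocus (iterateFrobenius E p (k * n)) (RingHom.id E) with hR
    have hRm : ∀ y : E, y ∈ R ↔ y ^ q ^ n = y := by
      intro y
      show iterateFrobenius E p ((k:ℕ) * n) y = y ↔ _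
      rw [iterateFrobenius_def, hqn]
    have : x ∈ R := by
      refine Subring.closure_le.mpr ?_ hx
      rintro y (⟨r, rfl⟩ | hy)
      · rw [SetLike.mem_coe, hRm, ← map_pow, ← hq, FiniteField.pow_card_pow]
      · rw [SetLike.mem_coe, hRm, ← hmem]; exact hy
    rw [hmem]
    exact (hRm x).mp this
  have hcardE : Fintype.card E = q ^ n := by
    rw [← key]
    exact (Fintype.card_congr ((Equiv.setCongr huniv).trans (Equiv.Set.univ E))).symm
  -- finrank
  have hrank : Module.finrank F E = n := by
    have h := Module.card_eq_pow_finrank (K := F) (V := E)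
    rw [hcardE, hq] at h
    exact (Nat.pow_right_injective hq2 h).symm
  have hint : ∀ x : E, IsIntegral F x := fun x => IsIntegral.of_finite F x
  have hdvd : ∀ x : E, (minpoly F x).natDegree ∣ n := fun x => hrank ▸ minpoly.degree_dvd (hint x)
  set A : Finset E := Finset.univ.filter (fun x => (minpoly F x).natDegree = n) with hA
  set B : ℕ → Finset E := fun d => Finset.univ.filter (fun x => x ^ q ^ d = x) with hB
  -- covering
  have hcover : (Finset.univ : Finset E) ⊆ A ∪ n.properDivisors.biUnion B := by
    intro x _
    by_cases hx : (minpoly F x).natDegree = n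
    · exact Finset.mem_union_left _ (by simp [hA, hx])
    · refine Finset.mem_union_right _ (Finset.mem_biUnion.mpr ⟨(minpoly F x).natDegree, ?_, ?_⟩)
      · exact Nat.mem_properDivisors.mpr ⟨hdvd x, lt_of_le_of_ne (Nat.le_of_dvd (by omega) (hdvd x)) hx⟩
      · simp only [hB, Finset.mem_filter, Finset.mem_univ, true_and]
        set K := IntermediateField.adjoin F {x} with hK
        haveI : Fintype K := Fintype.ofFinite K
        have hKrank : Module.finrank F K = (minpoly F x).natDegree :=
          IntermediateField.adjoin.finrank (hint x)
        have hKcard : Fintype.card K = q ^ (minpoly F x).natDegree := by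
          rw [Module.card_eq_pow_finrank (K := F) (V := K), hKrank, hq]
        have hxK : x ∈ K := IntermediateField.mem_adjoin_simple_self F x
        have := FiniteField.pow_card (⟨x, hxK⟩ : K)
        rw [hKcard] at this
        simpa using congrArg Subtype.val this
  -- card of B d
  have hBcard : ∀ d ∈ n.properDivisors, (B d).card ≤ q ^ d := by
    intro d hd
    have hd1 : 1 ≤ d := Nat.pos_of_mem_properDivisors hd
    have hne : (X ^ q ^ d - X : E[X]) ≠ 0 :=
      FiniteField.X_pow_card_pow_sub_X_ne_zero E (by omega) hq2
    have hsub : B d ⊆ (X ^ q ^ d - X : E[X]).roots.toFinset := by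
      intro x hx
      simp only [hB, Finset.mem_filter] at hx
      rw [Multiset.mem_toFinset, mem_roots hne]
      simp [IsRoot, sub_eq_zero, hx.2]
    calc (B d).card ≤ _ := Finset.card_le_card hsub
      _ ≤ Multiset.card (X ^ q ^ d - X : E[X]).roots := Multiset.toFinset_card_le _
      _ ≤ (X ^ q ^ d - X : E[X]).natDegree := card_roots' _
      _ = q ^ d := FiniteField.X_pow_card_pow_sub_X_natDegree_eq E (by omega) hq2
  -- card of A vs irreducibles
  set t : Finset F[X] := A.image (fun x => minpoly F x) with ht
  have hAcard : A.card ≤ n * t.card := by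
    apply Finset.card_le_mul_card_image
    intro P hP
    obtain ⟨x₀, hx₀A, rfl⟩ := Finset.mem_image.mp hP
    have hdegP : (minpoly F x₀).natDegree = n := (Finset.mem_filter.mp hx₀A).2
    have hPne : (minpoly F x₀).map (algebraMap F E) ≠ 0 := by
      apply Polynomial.map_ne_zero
      exact minpoly.ne_zero (hint x₀)
    have : A.filter (fun x => minpoly F x = minpoly F x₀) ⊆
        ((minpoly F x₀).map (algebraMap F E)).roots.toFinset := by
      intro x hx
      simp only [Finset.mem_filter] at hx
      rw [Multiset.mem_toFinset, mem_roots hPne, IsRoot, eval_map, ← aeval_def, ← hx.2]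
      exact minpoly.aeval F x
    calc (A.filter (fun x => minpoly F x = minpoly F x₀)).card
        ≤ _ := Finset.card_le_card this
      _ ≤ Multiset.card ((minpoly F x₀).map (algebraMap F E)).roots := Multiset.toFinset_card_le _
      _ ≤ ((minpoly F x₀).map (algebraMap F E)).natDegree := card_roots' _
      _ = n := by rw [natDegree_map, hdegP]
  have htcard : t.card ≤ Nat.card {P : F[X] // P.Monic ∧ Irreducible P ∧ P.natDegree = n} := by
    haveI : Finite {P : F[X] // P.Monic ∧ Irreducible P ∧ P.natDegree = n} := by
      refine Finite.of_injective (β := Fin (n+1) → F)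
        (fun P => (fun i : Fin (n+1) => (P : F[X]).coeff i)) ?_
      rintro ⟨P, _, _, hPd⟩ ⟨Q, _, _, hQd⟩ h
      ext1
      show P = Q
      ext i
      rcases le_or_gt i n with hi | hi
      · exact congrFun h ⟨i, by omega⟩
      · rw [coeff_eq_zero_of_natDegree_lt (by omega), coeff_eq_zero_of_natDegree_lt (by omega)]
    have : ∀ P ∈ t, P.Monic ∧ Irreducible P ∧ P.natDegree = n := by
      intro P hP
      obtain ⟨x₀, hx₀A, rfl⟩ := Finset.mem_image.mp hP
      exact ⟨minpoly.monic (hint x₀), minpoly.irreducible (hint x₀), (Finset.mem_filter.mp hx₀A).2⟩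
    rw [← Nat.card_eq_finsetCard]
    refine Nat.card_le_card_of_injective
      (fun P => (⟨P.1, this P.1 P.2⟩ : {P : F[X] // P.Monic ∧ Irreducible P ∧ P.natDegree = n}))
      ?_
    intro a b hab
    exact Subtype.ext (Subtype.mk_eq_mk.mp hab)
  calc q ^ n = (Finset.univ : Finset E).card := by rw [Finset.card_univ, hcardE]
    _ ≤ (A ∪ n.properDivisors.biUnion B).card := Finset.card_le_card hcover
    _ ≤ A.card + (n.properDivisors.biUnion B).card := Finset.card_union_le _ _
    _ ≤ A.card + ∑ d ∈ n.properDivisors, (B d).card := by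
        gcongr; exact Finset.card_biUnion_le
    _ ≤ n * t.card + ∑ d ∈ n.properDivisors, q ^ d :=
        Nat.add_le_add hAcard (Finset.sum_le_sum hBcard)
    _ ≤ _ := by
        rw [Nat.add_comm]
        exact Nat.add_le_add le_rfl (Nat.mul_le_mul le_rfl htcard)

lemma geom_aux (x : ℝ) (hx : 2 ≤ x) : ∀ m : ℕ, ∑ d ∈ Finset.range (m+1), x ^ d ≤ 2 * x ^ m := by
  intro m
  induction m with
  | zero => norm_num
  | succ m ih =>
    rw [Finset.sum_range_succ]
    have h1 : (2:ℝ) * x ^ m ≤ x ^ (m+1) := by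
      rw [pow_succ]
      calc 2 * x^m = x^m * 2 := by ring
        _ ≤ x^m * x := by
            apply mul_le_mul_of_nonneg_left hx (pow_nonneg (by linarith) m)
    calc ∑ d ∈ Finset.range (m+1), x ^ d + x ^ (m+1)
        ≤ 2*x^m + x^(m+1) := by linarith
      _ ≤ 2 * x ^ (m+1) := by linarith

/-- Prime polynomial theorem lower bound: for `q` the size of a finite field `F`
and `n ≥ 1`, the number `π_q(n)` of monic irreducible polynomials of degree `n`
satisfies `π_q(n) ≥ q^n/n - q^(n/2)/n - q^(n/3)`. -/
theorem stmt_7 (F : Type) [Field F] [Fintype F] (q : ℕ) (hq : Fintype.card F = q)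
    (n : ℕ) (hn : 1 ≤ n) :
    (Nat.card {P : F[X] // P.Monic ∧ Irreducible P ∧ P.natDegree = n} : ℝ)
      ≥ (q : ℝ) ^ (n : ℝ) / n - (q : ℝ) ^ ((n : ℝ) / 2) / n - (q : ℝ) ^ ((n : ℝ) / 3) := by
  have hq2 : 2 ≤ q := hq ▸ Fintype.one_lt_card
  have hq1 : (1:ℝ) ≤ q := by exact_mod_cast (by omega : 1 ≤ q)
  set π := Nat.card {P : F[X] // P.Monic ∧ Irreducible P ∧ P.natDegree = n} with hπ
  have hcount := key_count F q hq n hn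
  have hcast : ((q:ℝ)) ^ n ≤ (∑ d ∈ n.properDivisors, (q:ℝ) ^ d) + n * π := by
    exact_mod_cast hcount
  have hnonneg2 : (0:ℝ) ≤ (q:ℝ) ^ ((n:ℝ)/2) := Real.rpow_nonneg (by positivity) _
  have hnonneg3 : (0:ℝ) ≤ (q:ℝ) ^ ((n:ℝ)/3) := Real.rpow_nonneg (by positivity) _
  rcases eq_or_lt_of_le hn with h1 | hn2
  · -- n = 1
    have h1' := h1.symm
    subst h1'
    rw [hπ] at hcast ⊢
    simp only [Nat.properDivisors_one, Finset.sum_empty, pow_one, Nat.cast_one, one_mul,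
      zero_add, div_one, Real.rpow_one] at hcast hnonneg2 hnonneg3 ⊢
    linarith
  · have hn2 : 2 ≤ n := hn2
    -- sum bound
    have hsubset : n.properDivisors ⊆ insert (n/2) (Finset.range (n/3+1)) := by
      intro d hd
      obtain ⟨hdvd, hlt⟩ := Nat.mem_properDivisors.mp hd
      rcases le_or_gt (3*d) n with h3 | h3
      · exact Finset.mem_insert_of_mem (Finset.mem_range.mpr (by omega))
      · obtain ⟨m, rfl⟩ := hdvd
        have hd1 : 1 ≤ d := Nat.pos_of_mem_properDivisors hd
        have hm2 : 2 ≤ m := by nlinarith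
        have hm3 : m < 3 := by nlinarith
        have : m = 2 := by omega
        subst this
        have : d * 2 / 2 = d := by omega
        rw [this]
        exact Finset.mem_insert_self _ _
    have hsum : ∑ d ∈ n.properDivisors, (q:ℝ) ^ d ≤ (q:ℝ)^(n/2) + 2*(q:ℝ)^(n/3) := by
      have h0 : ∑ d ∈ n.properDivisors, (q:ℝ)^d
          ≤ ∑ d ∈ insert (n/2) (Finset.range (n/3+1)), (q:ℝ)^d :=
        Finset.sum_le_sum_of_subset_of_nonneg hsubset (fun i _ _ => by positivity)
      have h2 : ∑ d ∈ insert (n/2) (Finset.range (n/3+1)), (q:ℝ)^d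
          ≤ (q:ℝ)^(n/2) + ∑ d ∈ Finset.range (n/3+1), (q:ℝ)^d := by
        by_cases hmem : (n/2) ∈ Finset.range (n/3+1)
        · rw [Finset.insert_eq_self.mpr hmem]
          have : (0:ℝ) ≤ (q:ℝ)^(n/2) := by positivity
          linarith
        · rw [Finset.sum_insert hmem]
      have h3 := geom_aux (q:ℝ) (by exact_mod_cast hq2) (n/3)
      linarith
    have e2 : ((q:ℝ))^(n/2 : ℕ) ≤ (q:ℝ)^((n:ℝ)/2) := by
      rw [← Real.rpow_natCast (q:ℝ) (n/2)]
      exact Real.rpow_le_rpow_of_exponent_le hq1 (Nat.cast_div_le)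
    have e3 : ((q:ℝ))^(n/3 : ℕ) ≤ (q:ℝ)^((n:ℝ)/3) := by
      rw [← Real.rpow_natCast (q:ℝ) (n/3)]
      exact Real.rpow_le_rpow_of_exponent_le hq1 (Nat.cast_div_le)
    have hn0 : (0:ℝ) < n := by exact_mod_cast Nat.pos_of_ne_zero (by omega)
    have h2n : (2:ℝ) ≤ n := by exact_mod_cast hn2
    have hp3 : (0:ℝ) ≤ (q:ℝ)^(n/3 : ℕ) := by positivity
    have main : (q:ℝ)^((n:ℝ)) ≤ (n:ℝ)*π + (q:ℝ)^((n:ℝ)/2) + (n:ℝ)*(q:ℝ)^((n:ℝ)/3) := by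
      rw [Real.rpow_natCast]
      nlinarith [hcast, hsum, e2, e3]
    rw [ge_iff_le, sub_sub, sub_le_iff_le_add, div_le_iff₀ hn0]
    have e4 : ((q:ℝ)^((n:ℝ)/2)/(n:ℝ)) * n = (q:ℝ)^((n:ℝ)/2) := div_mul_cancel₀ _ (ne_of_gt hn0)
    nlinarith [main, e4]
end

section
/- Let q be a prime power and for each m ≥ 1 let π_q(j) be the number of monic irreducible polynomials of degree j in F_q[t]. Then there exists a constant C depending only on q such that for all m ≥ 1, | ∑_{j=1}^m (j·log(q)·π_q(j))/q^j − m·log(q) | ≤ C. -/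
/-!
Splitting `X ^ q ^ n - X` into its distinct monic irreducible factors gives Gauss's formula
`∑_{d ∣ n} d π_q(d) = q ^ n`. Hence `n π_q(n) ≤ q ^ n`, while the proper divisors contribute at
most `∑_{d ≤ n/2} q ^ d < q ^ (n/2 + 1)`. So the `j`-th summand `j log q π_q(j) / q ^ j` differs
from `log q` by at most `log q · q · q ^ (-j/2)`, and these errors have a bounded sum.
-/

open Polynomial UniqueFactorizationMonoid Finset

theorem Polynomial.sum_natDegree_toFinset_normalizedFactors {K : Type*} [Field K] [DecidableEq K]
    {f : K[X]} (hf : Squarefree f) :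
    ∑ Q ∈ (normalizedFactors f).toFinset, Q.natDegree = f.natDegree := by
  have hf0 : f ≠ 0 := hf.ne_zero
  rw [Finset.sum, Multiset.toFinset_val,
    Multiset.dedup_eq_self.mpr ((squarefree_iff_nodup_normalizedFactors hf0).mp hf),
    ← natDegree_multiset_prod _ (zero_notMem_normalizedFactors f)]
  exact natDegree_eq_of_degree_eq (degree_eq_degree_of_associated (prod_normalizedFactors hf0))

theorem Nat.le_div_two_of_mem_properDivisors {d n : ℕ} (h : d ∈ n.properDivisors) : d ≤ n / 2 := by
  obtain ⟨⟨c, rfl⟩, hlt⟩ := Nat.mem_properDivisors.mp h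
  have hc : 2 ≤ c := by
    rcases c with _ | _ | c
    · simp at hlt
    · simp at hlt
    · omega
  exact (Nat.le_div_iff_mul_le two_pos).mpr (Nat.mul_le_mul_left d hc)

theorem Real.pow_div_two_le_sqrt_pow {x : ℝ} (hx : 1 ≤ x) (n : ℕ) : x ^ (n / 2) ≤ √x ^ n := by
  calc x ^ (n / 2) = √x ^ (2 * (n / 2)) := by rw [pow_mul, Real.sq_sqrt (by linarith)]
    _ ≤ √x ^ n := pow_le_pow_right₀ (Real.one_le_sqrt.mpr hx) (Nat.mul_div_le n 2)

theorem abs_sum_le_of_abs_le_geometric {s : Finset ℕ} {e : ℕ → ℝ} {c r : ℝ} (hc : 0 ≤ c)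
    (hr₀ : 0 ≤ r) (hr₁ : r < 1) (he : ∀ j ∈ s, |e j| ≤ c * r ^ j) :
    |∑ j ∈ s, e j| ≤ c / (1 - r) :=
  calc |∑ j ∈ s, e j| ≤ ∑ j ∈ s, c * r ^ j := (abs_sum_le_sum_abs _ _).trans (sum_le_sum he)
    _ = c * ∑ j ∈ s, r ^ j := (mul_sum _ _ _).symm
    _ ≤ c * ∑' j, r ^ j := by
      gcongr
      exact (summable_geometric_of_lt_one hr₀ hr₁).sum_le_tsum _ fun _ _ ↦ by positivity
    _ = c / (1 - r) := by rw [tsum_geometric_of_lt_one hr₀ hr₁, div_eq_mul_inv]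

theorem abs_div_pow_sub_one_le_of_le_add {a q : ℝ} {n : ℕ} (hq : 1 ≤ q) (hupper : a ≤ q ^ n)
    (hlower : q ^ n ≤ a + q * q ^ (n / 2)) :
    |a / q ^ n - 1| ≤ q * (√q)⁻¹ ^ n := by
  have hqn : 0 < q ^ n := by positivity
  have hsqrt : q ^ n = √q ^ n * √q ^ n := by rw [← mul_pow, Real.mul_self_sqrt (by linarith)]
  have hhalf : q * q ^ (n / 2) ≤ q * (√q)⁻¹ ^ n * q ^ n :=
    calc q * q ^ (n / 2) ≤ q * √q ^ n := by gcongr; exact Real.pow_div_two_le_sqrt_pow hq n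
      _ = q * (√q)⁻¹ ^ n * q ^ n := by
        rw [hsqrt, inv_pow, ← mul_assoc, mul_assoc q, inv_mul_cancel₀ (by positivity), mul_one]
  rw [abs_le, le_sub_iff_add_le, sub_le_iff_le_add, le_div_iff₀ hqn, div_le_iff₀ hqn]
  constructor <;> nlinarith [hhalf, pow_nonneg (inv_nonneg.mpr (Real.sqrt_nonneg q)) n]

namespace FiniteField

variable (F : Type*) [Field F] [Finite F]

theorem squarefree_X_pow_card_pow_sub_X {n : ℕ} (hn : n ≠ 0) :
    Squarefree (X ^ Nat.card F ^ n - X : F[X]) := by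
  have := Fintype.ofFinite F
  refine (galois_poly_separable (ringChar F) _ ?_).squarefree
  exact dvd_pow ((ringChar.spec F _).mp (by simp [Nat.card_eq_fintype_card])) hn

theorem mem_normalizedFactors_X_pow_card_pow_sub_X [DecidableEq F] {n : ℕ} (hn : n ≠ 0)
    {Q : F[X]} :
    Q ∈ normalizedFactors (X ^ Nat.card F ^ n - X : F[X]) ↔
      Q.Monic ∧ Irreducible Q ∧ Q.natDegree ∣ n := by
  rw [Polynomial.mem_normalizedFactors_iff
    (X_pow_card_pow_sub_X_ne_zero F hn Finite.one_lt_card)]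
  constructor
  · rintro ⟨hi, hm, hdvd⟩
    exact ⟨hm, hi, hi.natDegree_dvd_iff_dvd_X_pow_card_pow_sub_X.mpr hdvd⟩
  · rintro ⟨hm, hi, hdvd⟩
    exact ⟨hi, hm, hi.natDegree_dvd_iff_dvd_X_pow_card_pow_sub_X.mp hdvd⟩

/-- `π_q(d)`. -/
noncomputable def monicIrreducibleCount (d : ℕ) : ℕ :=
  Nat.card {P : F[X] // P.Monic ∧ Irreducible P ∧ P.natDegree = d}

theorem monicIrreducibleCount_eq_card_filter [DecidableEq F] {n d : ℕ} (hn : n ≠ 0)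
    (hd : d ∣ n) :
    monicIrreducibleCount F d =
      #{Q ∈ (normalizedFactors (X ^ Nat.card F ^ n - X : F[X])).toFinset | Q.natDegree = d} := by
  refine (Nat.card_congr (Equiv.subtypeEquivRight fun Q ↦ ?_)).trans (Nat.card_eq_finsetCard _)
  rw [mem_filter, Multiset.mem_toFinset, mem_normalizedFactors_X_pow_card_pow_sub_X F hn]
  constructor
  · rintro ⟨hm, hi, rfl⟩
    exact ⟨⟨hm, hi, hd⟩, rfl⟩
  · rintro ⟨⟨hm, hi, -⟩, rfl⟩
    exact ⟨hm, hi, rfl⟩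

theorem sum_divisors_mul_monicIrreducibleCount {n : ℕ} (hn : n ≠ 0) :
    ∑ d ∈ n.divisors, d * monicIrreducibleCount F d = Nat.card F ^ n := by
  classical
  set T := (normalizedFactors (X ^ Nat.card F ^ n - X : F[X])).toFinset
  have hmaps : ∀ Q ∈ T, Q.natDegree ∈ n.divisors := fun Q hQ ↦ Nat.mem_divisors.mpr
    ⟨((mem_normalizedFactors_X_pow_card_pow_sub_X F hn).mp (Multiset.mem_toFinset.mp hQ)).2.2, hn⟩
  calc ∑ d ∈ n.divisors, d * monicIrreducibleCount F d
      = ∑ d ∈ n.divisors, ∑ Q ∈ T with Q.natDegree = d, Q.natDegree := by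
        refine sum_congr rfl fun d hd ↦ ?_
        rw [monicIrreducibleCount_eq_card_filter F hn (Nat.dvd_of_mem_divisors hd),
          sum_const_nat fun Q hQ ↦ (mem_filter.mp hQ).2, mul_comm]
    _ = ∑ Q ∈ T, Q.natDegree := sum_fiberwise_of_maps_to hmaps _
    _ = Nat.card F ^ n := by
      rw [sum_natDegree_toFinset_normalizedFactors (squarefree_X_pow_card_pow_sub_X F hn),
        X_pow_card_pow_sub_X_natDegree_eq F hn Finite.one_lt_card]

theorem mul_monicIrreducibleCount_le {n : ℕ} (hn : n ≠ 0) :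
    n * monicIrreducibleCount F n ≤ Nat.card F ^ n := by
  rw [← sum_divisors_mul_monicIrreducibleCount F hn]
  exact single_le_sum (f := fun d ↦ d * monicIrreducibleCount F d) (fun _ _ ↦ Nat.zero_le _)
    (Nat.mem_divisors_self n hn)

theorem pow_card_le_mul_monicIrreducibleCount_add {n : ℕ} (hn : n ≠ 0) :
    Nat.card F ^ n ≤ n * monicIrreducibleCount F n + Nat.card F ^ (n / 2 + 1) := by
  have hproper : ∑ d ∈ n.properDivisors, d * monicIrreducibleCount F d
      ≤ Nat.card F ^ (n / 2 + 1) :=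
    calc ∑ d ∈ n.properDivisors, d * monicIrreducibleCount F d
        ≤ ∑ d ∈ n.properDivisors, Nat.card F ^ d :=
          sum_le_sum fun d hd ↦
            mul_monicIrreducibleCount_le F (Nat.pos_of_mem_properDivisors hd).ne'
      _ ≤ Nat.card F ^ (n / 2 + 1) := (Nat.geomSum_lt Finite.one_lt_card fun d hd ↦
          Nat.lt_succ_of_le (Nat.le_div_two_of_mem_properDivisors hd)).le
  rw [← sum_divisors_mul_monicIrreducibleCount F hn, ← Nat.cons_self_properDivisors hn, sum_cons]
  omega

theorem abs_mul_monicIrreducibleCount_div_pow_sub_one_le {n : ℕ} (hn : n ≠ 0) :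
    |(n * monicIrreducibleCount F n : ℝ) / (Nat.card F : ℝ) ^ n - 1| ≤
      Nat.card F * (√(Nat.card F))⁻¹ ^ n := by
  refine abs_div_pow_sub_one_le_of_le_add (by exact_mod_cast Finite.one_lt_card.le)
    (by exact_mod_cast mul_monicIrreducibleCount_le F hn) ?_
  rw [← pow_succ']
  exact_mod_cast pow_card_le_mul_monicIrreducibleCount_add F hn

end FiniteField

/-- There is a constant `C` depending only on `q` such that for all `m ≥ 1`,
`|∑_{j=1}^m j·log(q)·π_q(j)/q^j − m·log(q)| ≤ C`, where `π_q(j)` is the number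
of monic irreducible polynomials of degree `j` over the field with `q` elements. -/
theorem stmt_8 (F : Type) [Field F] [Fintype F] (q : ℕ) (hq : Fintype.card F = q) :
    ∃ C : ℝ, ∀ m : ℕ, 1 ≤ m →
      |(∑ j ∈ Finset.Icc 1 m,
          (j : ℝ) * Real.log q *
            (Nat.card {P : F[X] // P.Monic ∧ Irreducible P ∧ P.natDegree = j} : ℝ)
              / (q : ℝ) ^ j)
        - (m : ℝ) * Real.log q| ≤ C := by
  subst hq
  rw [Fintype.card_eq_nat_card]
  have hr₁ : (√(Nat.card F : ℝ))⁻¹ < 1 :=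
    inv_lt_one_of_one_lt₀ (Real.lt_sqrt_of_sq_lt (by exact_mod_cast Finite.one_lt_card))
  refine ⟨Real.log (Nat.card F) * (Nat.card F / (1 - (√(Nat.card F : ℝ))⁻¹)), fun m _ ↦ ?_⟩
  have hsum : ∑ j ∈ Icc 1 m, (j : ℝ) * Real.log (Nat.card F) *
        (FiniteField.monicIrreducibleCount F j : ℝ) / (Nat.card F : ℝ) ^ j
      - m * Real.log (Nat.card F) = Real.log (Nat.card F) * ∑ j ∈ Icc 1 m,
        ((j * FiniteField.monicIrreducibleCount F j : ℝ) / (Nat.card F : ℝ) ^ j - 1) := by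
    have hm : m * Real.log (Nat.card F) = ∑ _j ∈ Icc 1 m, Real.log (Nat.card F) := by simp
    rw [hm, ← sum_sub_distrib, mul_sum]
    exact sum_congr rfl fun j _ ↦ by ring
  refine (congrArg abs hsum).trans_le ?_
  rw [abs_mul, abs_of_nonneg (Real.log_natCast_nonneg _)]
  gcongr
  exact abs_sum_le_of_abs_le_geometric (by positivity) (by positivity) hr₁ fun j hj ↦
    FiniteField.abs_mul_monicIrreducibleCount_div_pow_sub_one_le F (by simp at hj; omega)
end

section
/- The function f(x) = x^(1/3)/(x^(2/3) − 1)^2 + 1/(x^(1/2) − 1) is strictly decreasing on the interval (1, ∞), and f(3) < 2.61. -/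
open Real

lemma cube_sq (x : ℝ) (hx : 0 ≤ x) : x ^ ((2 : ℝ)/3) = (x ^ ((1 : ℝ)/3)) ^ 2 := by
  rw [← Real.rpow_natCast (x ^ ((1 : ℝ)/3)) 2, ← Real.rpow_mul hx]
  norm_num

lemma one_lt_rpow' {x : ℝ} (hx : 1 < x) {y : ℝ} (hy : 0 < y) : 1 < x ^ y :=
  Real.one_lt_rpow_iff_of_pos (by linarith) |>.mpr (Or.inl ⟨hx, hy⟩)

/-- The function `f(x) = x^(1/3)/(x^(2/3) − 1)^2 + 1/(x^(1/2) − 1)` is strictly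
decreasing on `(1, ∞)`, and `f 3 < 2.61`. -/
theorem stmt_11 :
    StrictAntiOn
      (fun x : ℝ => x ^ ((1 : ℝ)/3) / (x ^ ((2 : ℝ)/3) - 1) ^ 2 + 1 / (x ^ ((1 : ℝ)/2) - 1))
      (Set.Ioi 1) ∧
    (3 : ℝ) ^ ((1 : ℝ)/3) / ((3 : ℝ) ^ ((2 : ℝ)/3) - 1) ^ 2
      + 1 / ((3 : ℝ) ^ ((1 : ℝ)/2) - 1) < 2.61 := by
  constructor
  · intro x hx y hy hxy
    simp only [Set.mem_Ioi] at hx hy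
    set a := x ^ ((1 : ℝ)/3) with ha
    set b := y ^ ((1 : ℝ)/3) with hb
    set c := x ^ ((1 : ℝ)/2) with hc
    set d := y ^ ((1 : ℝ)/2) with hd
    have hx0 : (0:ℝ) ≤ x := by linarith
    have hy0 : (0:ℝ) ≤ y := by linarith
    have e1 : x ^ ((2 : ℝ)/3) = a ^ 2 := cube_sq x hx0
    have e2 : y ^ ((2 : ℝ)/3) = b ^ 2 := cube_sq y hy0
    have ha1 : 1 < a := one_lt_rpow' hx (by norm_num)
    have hb1 : 1 < b := one_lt_rpow' hy (by norm_num)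
    have hc1 : 1 < c := one_lt_rpow' hx (by norm_num)
    have hd1 : 1 < d := one_lt_rpow' hy (by norm_num)
    have hab : a < b := Real.rpow_lt_rpow hx0 hxy (by norm_num)
    have hcd : c < d := Real.rpow_lt_rpow hx0 hxy (by norm_num)
    simp only [e1, e2]
    have key1 : b / (b ^ 2 - 1) ^ 2 < a / (a ^ 2 - 1) ^ 2 := by
      rw [div_lt_div_iff₀ (pow_pos (by nlinarith : (0:ℝ) < b ^ 2 - 1) 2) (pow_pos (by nlinarith : (0:ℝ) < a ^ 2 - 1) 2)]
      nlinarith [mul_pos (sub_pos.mpr hab) (mul_pos (by positivity : (0:ℝ) < a) (by positivity : (0:ℝ) < b)), sq_nonneg (a*b - 1), sq_nonneg (a - b), sq_nonneg (a + b), mul_pos (sub_pos.mpr ha1) (sub_pos.mpr hb1)]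
    have key2 : 1 / (d - 1) < 1 / (c - 1) :=
      one_div_lt_one_div_of_lt (by linarith) (by linarith)
    linarith
  · have ha : ((3:ℝ) ^ ((1 : ℝ)/3)) ^ 3 = 3 := by
      rw [← Real.rpow_natCast ((3:ℝ) ^ ((1 : ℝ)/3)) 3, ← Real.rpow_mul (by norm_num)]
      norm_num
    have hc : ((3:ℝ) ^ ((1 : ℝ)/2)) ^ 2 = 3 := by
      rw [← Real.rpow_natCast ((3:ℝ) ^ ((1 : ℝ)/2)) 2, ← Real.rpow_mul (by norm_num)]
      norm_num
    set a := (3:ℝ) ^ ((1 : ℝ)/3) with had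
    set c := (3:ℝ) ^ ((1 : ℝ)/2) with hcd
    have e1 : (3:ℝ) ^ ((2 : ℝ)/3) = a ^ 2 := cube_sq 3 (by norm_num)
    have ha1 : 1 < a := one_lt_rpow' (by norm_num) (by norm_num)
    have hc1 : 1 < c := one_lt_rpow' (by norm_num) (by norm_num)
    have haub : a < 1.4423 := by nlinarith
    have halb : 1.4422 < a := by nlinarith
    have hcub : c < 1.7321 := by nlinarith
    have hclb : 1.732 < c := by nlinarith
    rw [e1]
    have h1 : a / (a ^ 2 - 1) ^ 2 ≤ (1.4423:ℝ) / ((1.4422:ℝ) ^ 2 - 1) ^ 2 := by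
      apply div_le_div₀ (by norm_num) (le_of_lt haub) (by norm_num)
      nlinarith
    have h2 : 1 / (c - 1) ≤ 1 / ((1.732:ℝ) - 1) :=
      one_div_le_one_div_of_le (by norm_num) (by linarith)
    calc a / (a ^ 2 - 1) ^ 2 + 1 / (c - 1)
        ≤ (1.4423:ℝ) / ((1.4422:ℝ) ^ 2 - 1) ^ 2 + 1 / ((1.732:ℝ) - 1) := by linarith
      _ < 2.61 := by norm_num
end

section
/- Let q be an odd prime power, and for each monic irreducible P of F_q[t] of odd degree define h_P(x) = log(N(P))·x/(N(P) − x) for x ∈ {−1, 0, 1}, where N(P) = q^(deg P). Then for every real α and every ε > 0 there exists a choice (x_P) ∈ {−1,0,1}^{P odd degree} such that the series ∑_P h_P(x_P) converges and |∑_P h_P(x_P) − α| < ε. -/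
open Polynomial Filter Topology
open scoped Finset

/-! Take `σ = ±1` with `σ |α| = α` and `x_P ∈ {0, σ}`: the series becomes `σ` times a
finite subsum of the positive terms `log N(P) / (N(P) - σ)`. These terms tend to `0` while
their sum diverges: an extension of `F` of prime degree `ℓ` has `q^ℓ - q` elements outside `F`,
each a root of a monic irreducible of degree `ℓ`, so the terms of degree `ℓ` add up to at least
`log q / 2`. A greedy finite subsum of such terms lands within `ε` below `|α|`. -/

theorem Finset.sum_le_or_exists_subset_sum_mem_Ioc {ι : Type*} [DecidableEq ι] (v : ι → ℝ)
    {ε t : ℝ} (ht : 0 ≤ t) (s : Finset ι) (hs : ∀ i ∈ s, v i < ε) :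
    ∑ i ∈ s, v i ≤ t ∨ ∃ u ⊆ s, ∑ i ∈ u, v i ∈ Set.Ioc (t - ε) t := by
  induction s using Finset.induction_on with
  | empty => exact Or.inl (by simpa using ht)
  | insert a s ha ih =>
    rw [Finset.sum_insert ha]
    rcases ih fun i hi ↦ hs i (Finset.mem_insert_of_mem hi) with hle | ⟨u, hus, hu⟩
    · by_cases hlt : v a + ∑ i ∈ s, v i ≤ t
      · exact Or.inl hlt
      · have := hs a (Finset.mem_insert_self a s)
        exact Or.inr ⟨s, Finset.subset_insert a s, by linarith, hle⟩
    · exact Or.inr ⟨u, hus.trans (Finset.subset_insert a s), hu⟩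

theorem exists_finset_sum_mem_Ioc_of_not_summable {ι : Type*} {v : ι → ℝ} (hv₀ : 0 ≤ v)
    (hv : Tendsto v cofinite (𝓝 0)) (hv_sum : ¬Summable v) {ε t : ℝ} (hε : 0 < ε) (ht : 0 ≤ t) :
    ∃ u : Finset ι, ∑ i ∈ u, v i ∈ Set.Ioc (t - ε) t := by
  classical
  have hlarge : {i | ¬v i < ε}.Finite :=
    eventually_cofinite.1 (hv.eventually (gt_mem_nhds hε))
  obtain ⟨s, hs⟩ : ∃ s : Finset ι, t + ∑ i ∈ hlarge.toFinset, v i < ∑ i ∈ s, v i := by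
    by_contra! h
    exact hv_sum (summable_of_sum_le hv₀ h)
  have hsmall : t < ∑ i ∈ s with v i < ε, v i := by
    have : ∑ i ∈ s with ¬v i < ε, v i ≤ ∑ i ∈ hlarge.toFinset, v i :=
      Finset.sum_le_sum_of_subset_of_nonneg
        (fun i hi ↦ by simpa using (Finset.mem_filter.1 hi).2) fun i _ _ ↦ hv₀ i
    linarith [Finset.sum_filter_add_sum_filter_not s (fun i ↦ v i < ε) v]
  rcases Finset.sum_le_or_exists_subset_sum_mem_Ioc v ht _ (fun i hi ↦ (Finset.mem_filter.1 hi).2)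
    with hle | ⟨u, -, hu⟩
  · exact absurd hle hsmall.not_ge
  · exact ⟨u, hu⟩

theorem Polynomial.finite_setOf_natDegree_lt (R : Type*) [Semiring R] [Finite R] (n : ℕ) :
    {p : R[X] | p.natDegree < n}.Finite := by
  have : Finite (degreeLT R n) := .of_equiv _ (degreeLTEquiv R n).toEquiv.symm
  refine (Set.toFinite (degreeLT R n : Set R[X])).subset fun p hp ↦ ?_
  exact mem_degreeLT.2 ((degree_le_natDegree).trans_lt (by exact_mod_cast hp))

theorem Polynomial.tendsto_natDegree_cofinite (R : Type*) [Semiring R] [Finite R] :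
    Tendsto (natDegree : R[X] → ℕ) cofinite atTop :=
  tendsto_atTop.2 fun n ↦ eventually_cofinite.2 (by simpa using finite_setOf_natDegree_lt R n)

theorem minpoly.natDegree_eq_finrank_of_prime {K L : Type*} [Field K] [Field L] [Algebra K L]
    [FiniteDimensional K L] (hL : (Module.finrank K L).Prime) {x : L}
    (hx : x ∉ (algebraMap K L).range) : (minpoly K x).natDegree = Module.finrank K L :=
  (hL.eq_one_or_self_of_dvd _ (minpoly.degree_dvd (.of_finite K x))).resolve_left
    (mt minpoly.natDegree_eq_one_iff.1 hx)

theorem FiniteField.exists_finset_monic_irreducible_natDegree_eq_prime (k : Type*) [Field k]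
    [Fintype k] {ℓ : ℕ} (hℓ : ℓ.Prime) :
    ∃ s : Finset k[X], (∀ P ∈ s, P.Monic ∧ Irreducible P ∧ P.natDegree = ℓ) ∧
      Fintype.card k ^ ℓ ≤ ℓ * s.card + Fintype.card k := by
  classical
  obtain ⟨p, _⟩ := CharP.exists k
  have : Fact p.Prime := ⟨CharP.char_is_prime k p⟩
  have : NeZero ℓ := ⟨hℓ.ne_zero⟩
  let L := Extension k p ℓ
  let : Fintype L := .ofFinite L
  set outside : Finset L := {x | x ∉ (algebraMap k L).range}
  have houtside (x : L) (hx : x ∈ outside) :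
      (minpoly k x).Monic ∧ Irreducible (minpoly k x) ∧ (minpoly k x).natDegree = ℓ := by
    have hint : IsIntegral k x := .of_finite k x
    have hfinrank : Module.finrank k L = ℓ := finrank_extension k p ℓ
    exact ⟨minpoly.monic hint, minpoly.irreducible hint,
      (minpoly.natDegree_eq_finrank_of_prime (by rwa [hfinrank]) (Finset.mem_filter.1 hx).2).trans
        hfinrank⟩
  have hfiber (P : k[X]) (hP : P ∈ outside.image (minpoly k)) :
      #{x ∈ outside | minpoly k x = P} ≤ ℓ := by
    obtain ⟨x, hx, rfl⟩ := Finset.mem_image.1 hP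
    have hne : (minpoly k x).map (algebraMap k L) ≠ 0 :=
      map_ne_zero (minpoly.ne_zero (.of_finite k x))
    calc #{y ∈ outside | minpoly k y = minpoly k x}
        ≤ #((minpoly k x).map (algebraMap k L)).roots.toFinset := by
          refine Finset.card_le_card fun y hy ↦ ?_
          rw [Multiset.mem_toFinset, mem_roots hne, IsRoot, eval_map_algebraMap,
            ← (Finset.mem_filter.1 hy).2]
          exact minpoly.aeval k y
      _ ≤ ((minpoly k x).map (algebraMap k L)).natDegree :=
          (Multiset.toFinset_card_le _).trans (card_roots' _)
      _ = ℓ := by rw [natDegree_map, (houtside x hx).2.2]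
  have hcard_range : #{x : L | x ∈ (algebraMap k L).range} ≤ Fintype.card k := by
    calc #{x : L | x ∈ (algebraMap k L).range} = #(Finset.univ.image (algebraMap k L)) := by
          congr 1; ext x; simp
      _ ≤ Fintype.card k := Finset.card_image_le
  have hcard : Fintype.card L = Fintype.card k ^ ℓ := by
    rw [Fintype.card_eq_nat_card, Fintype.card_eq_nat_card]
    exact natCard_extension k p ℓ
  refine ⟨outside.image (minpoly k), fun P hP ↦ ?_, ?_⟩
  · obtain ⟨x, hx, rfl⟩ := Finset.mem_image.1 hP
    exact houtside x hx
  · have := Finset.card_le_mul_card_image outside ℓ hfiber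
    have : #{x : L | x ∈ (algebraMap k L).range} + #outside = Fintype.card L :=
      Finset.card_filter_add_card_filter_not _
    omega

/-- For `σ = ±1` and `deg P = d`, `h_P(σ) = σ * logNormRatio q σ d`, as `N(P) = q ^ d`. -/
noncomputable def logNormRatio (q : ℕ) (σ : ℝ) (d : ℕ) : ℝ :=
  d * Real.log q / ((q : ℝ) ^ d - σ)

theorem log_pow_mul_div_sub_eq_mul_logNormRatio (q d : ℕ) (σ : ℝ) :
    Real.log ((q : ℝ) ^ d) * σ / ((q : ℝ) ^ d - σ) = σ * logNormRatio q σ d := by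
  rw [logNormRatio, Real.log_pow]
  ring

section LogNormRatio

variable {q : ℕ} (hq : 2 ≤ q) {σ : ℝ} (hσ₁ : σ ≤ 1)
include hq hσ₁

theorem logNormRatio_nonneg (d : ℕ) : 0 ≤ logNormRatio q σ d := by
  have : (1 : ℝ) ≤ (q : ℝ) ^ d := one_le_pow₀ (by exact_mod_cast (by omega : 1 ≤ q))
  have := Real.log_nonneg (by exact_mod_cast (by omega : 1 ≤ q) : (1 : ℝ) ≤ q)
  exact div_nonneg (by positivity) (by linarith)

theorem tendsto_logNormRatio_atTop : Tendsto (logNormRatio q σ) atTop (𝓝 0) := by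
  have hq₁ : (1 : ℝ) < q := by exact_mod_cast hq
  have hq₂ : (2 : ℝ) ≤ q := by exact_mod_cast hq
  have hlim :
      Tendsto (fun d : ℕ ↦ 2 * Real.log q * ((d : ℝ) ^ 1 / (q : ℝ) ^ d)) atTop (𝓝 0) := by
    simpa using (tendsto_pow_const_div_const_pow_of_one_lt 1 hq₁).const_mul (2 * Real.log q)
  refine squeeze_zero' (.of_forall (logNormRatio_nonneg hq hσ₁)) ?_ hlim
  filter_upwards [eventually_ge_atTop 1] with d hd
  have hqd : (q : ℝ) ≤ (q : ℝ) ^ d := le_self_pow₀ hq₁.le (by omega)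
  calc logNormRatio q σ d ≤ d * Real.log q / ((q : ℝ) ^ d / 2) :=
        div_le_div_of_nonneg_left (by have := Real.log_pos hq₁; positivity) (by positivity)
          (by linarith)
    _ = 2 * Real.log q * ((d : ℝ) ^ 1 / (q : ℝ) ^ d) := by ring

theorem half_log_le_mul_logNormRatio (hσ₀ : -1 ≤ σ) {ℓ n : ℕ} (hℓ : 3 ≤ ℓ)
    (hn : q ^ ℓ ≤ ℓ * n + q) :
    Real.log q / 2 ≤ n * logNormRatio q σ ℓ := by
  have hbig : 2 * q + 1 ≤ q ^ ℓ :=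
    calc 2 * q + 1 ≤ q ^ 2 * q := by nlinarith
      _ = q ^ 3 := by ring
      _ ≤ q ^ ℓ := Nat.pow_le_pow_right (by omega) hℓ
  have hbigR : 2 * (q : ℝ) + 1 ≤ (q : ℝ) ^ ℓ := by exact_mod_cast hbig
  have hnR : (q : ℝ) ^ ℓ ≤ ℓ * n + q := by exact_mod_cast hn
  have hlog : 0 ≤ Real.log q := Real.log_nonneg (by exact_mod_cast (by omega : 1 ≤ q))
  have hq₂ : (2 : ℝ) ≤ q := by exact_mod_cast hq
  have hden : 0 < (q : ℝ) ^ ℓ - σ := by linarith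
  have hden_le : (q : ℝ) ^ ℓ - σ ≤ 2 * (ℓ * n) := by linarith
  rw [logNormRatio, ← mul_div_assoc, le_div_iff₀ hden]
  nlinarith [mul_le_mul_of_nonneg_left hden_le hlog]

end LogNormRatio

abbrev OddMonicIrreducible (F : Type*) [Field F] : Type _ :=
  {P : F[X] // P.Monic ∧ Irreducible P ∧ Odd P.natDegree}

section OddMonicIrreducible

variable {F : Type*} [Field F] [Fintype F] {σ : ℝ}

theorem tendsto_logNormRatio_natDegree_cofinite (hσ₁ : σ ≤ 1) :
    Tendsto (fun P : OddMonicIrreducible F ↦ logNormRatio (Fintype.card F) σ P.1.natDegree)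
      cofinite (𝓝 0) :=
  (tendsto_logNormRatio_atTop Fintype.one_lt_card hσ₁).comp
    ((tendsto_natDegree_cofinite F).comp Subtype.val_injective.tendsto_cofinite)

theorem exists_finset_natDegree_eq_half_log_le_sum (hσ₀ : -1 ≤ σ) (hσ₁ : σ ≤ 1)
    {ℓ : ℕ} (hℓ : ℓ.Prime) (hℓ₃ : 3 ≤ ℓ) :
    ∃ B : Finset (OddMonicIrreducible F), (∀ P ∈ B, P.1.natDegree = ℓ) ∧
      Real.log (Fintype.card F) / 2 ≤
        ∑ P ∈ B, logNormRatio (Fintype.card F) σ P.1.natDegree := by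
  classical
  obtain ⟨s, hs, hcard⟩ := FiniteField.exists_finset_monic_irreducible_natDegree_eq_prime F hℓ
  have hodd : Odd ℓ := hℓ.odd_of_ne_two (by omega)
  have hmem (P) (hP : P ∈ s) : P.Monic ∧ Irreducible P ∧ Odd P.natDegree :=
    ⟨(hs P hP).1, (hs P hP).2.1, (hs P hP).2.2 ▸ hodd⟩
  refine ⟨s.subtype _, fun P hP ↦ (hs P (Finset.mem_subtype.1 hP)).2.2, ?_⟩
  rw [Finset.sum_congr rfl fun P hP ↦ by rw [(hs P (Finset.mem_subtype.1 hP)).2.2],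
    Finset.sum_const, nsmul_eq_mul, Finset.card_subtype, Finset.filter_true_of_mem hmem]
  exact half_log_le_mul_logNormRatio Fintype.one_lt_card hσ₁ hσ₀ hℓ₃ hcard

theorem not_summable_logNormRatio_natDegree (hσ₀ : -1 ≤ σ) (hσ₁ : σ ≤ 1) :
    ¬Summable fun P : OddMonicIrreducible F ↦
      logNormRatio (Fintype.card F) σ P.1.natDegree := by
  intro hsum
  have hlog : 0 < Real.log (Fintype.card F) / 2 :=
    half_pos (Real.log_pos (by exact_mod_cast Fintype.one_lt_card))
  obtain ⟨T, hT⟩ := summable_iff_vanishing.1 hsum _ (Iio_mem_nhds hlog)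
  obtain ⟨ℓ, hℓ, hℓp⟩ := Nat.exists_infinite_primes (T.sup (fun P ↦ P.1.natDegree) + 3)
  obtain ⟨B, hBdeg, hB⟩ :=
    exists_finset_natDegree_eq_half_log_le_sum (F := F) hσ₀ hσ₁ hℓp (by omega)
  refine (hT B (Finset.disjoint_left.2 fun P hPB hPT ↦ ?_)).not_ge hB
  have := Finset.le_sup (f := fun P : OddMonicIrreducible F ↦ P.1.natDegree) hPT
  simp only [hBdeg P hPB] at this
  omega

end OddMonicIrreducible

theorem exists_eq_neg_one_or_eq_one_mul_abs_eq (α : ℝ) :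
    ∃ σ : ℤ, (σ = -1 ∨ σ = 1) ∧ (σ : ℝ) * |α| = α := by
  rcases le_or_gt 0 α with h | h
  · exact ⟨1, by simp, by simp [abs_of_nonneg h]⟩
  · exact ⟨-1, by simp, by simp [abs_of_neg h]⟩

theorem stmt_15_general (F : Type) [Field F] [Fintype F] (q : ℕ) (hq : Fintype.card F = q)
    (α : ℝ) (ε : ℝ) (hε : 0 < ε) :
    ∃ x : {P : F[X] // P.Monic ∧ Irreducible P ∧ Odd P.natDegree} → ℤ,
      (∀ P, x P ∈ ({-1, 0, 1} : Set ℤ)) ∧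
      Summable (fun P : {P : F[X] // P.Monic ∧ Irreducible P ∧ Odd P.natDegree} =>
        Real.log ((q : ℝ) ^ P.1.natDegree) * (x P : ℝ) / ((q : ℝ) ^ P.1.natDegree - (x P : ℝ))) ∧
      |(∑' P : {P : F[X] // P.Monic ∧ Irreducible P ∧ Odd P.natDegree},
          Real.log ((q : ℝ) ^ P.1.natDegree) * (x P : ℝ) / ((q : ℝ) ^ P.1.natDegree - (x P : ℝ)))
        - α| < ε := by
  classical
  subst hq
  obtain ⟨σ, hσ, hσα⟩ := exists_eq_neg_one_or_eq_one_mul_abs_eq α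
  have hσ_abs : |(σ : ℝ)| = 1 := by rcases hσ with rfl | rfl <;> simp
  obtain ⟨hσ₀, hσ₁⟩ := abs_le.1 hσ_abs.le
  obtain ⟨U, hU⟩ := exists_finset_sum_mem_Ioc_of_not_summable
    (fun P ↦ logNormRatio_nonneg (Fintype.one_lt_card (α := F)) hσ₁ _)
    (tendsto_logNormRatio_natDegree_cofinite hσ₁) (not_summable_logNormRatio_natDegree hσ₀ hσ₁)
    hε (abs_nonneg α)
  have hterm (P : OddMonicIrreducible F) :
      Real.log ((Fintype.card F : ℝ) ^ P.1.natDegree) * (((if P ∈ U then σ else 0 : ℤ)) : ℝ) /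
          ((Fintype.card F : ℝ) ^ P.1.natDegree - (((if P ∈ U then σ else 0 : ℤ)) : ℝ)) =
        if P ∈ U then σ * logNormRatio (Fintype.card F) σ P.1.natDegree else 0 := by
    split_ifs
    · exact log_pow_mul_div_sub_eq_mul_logNormRatio _ _ _
    · simp
  have hsum : HasSum (fun P : OddMonicIrreducible F ↦
      if P ∈ U then σ * logNormRatio (Fintype.card F) σ P.1.natDegree else 0)
      (∑ P ∈ U, σ * logNormRatio (Fintype.card F) σ P.1.natDegree) := by
    simpa [Finset.sum_ite_mem] using hasSum_sum_of_ne_finset_zero (s := U) fun P hP ↦ if_neg hP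
  refine ⟨fun P ↦ if P ∈ U then σ else 0, fun P ↦ ?_, ?_, ?_⟩
  · by_cases hP : P ∈ U <;> rcases hσ with rfl | rfl <;> simp [hP]
  · simpa only [hterm] using hsum.summable
  · simp only [hterm]
    rw [hsum.tsum_eq, ← Finset.mul_sum, ← hσα, ← mul_sub, abs_mul, hσ_abs, one_mul,
      abs_sub_lt_iff]
    constructor <;> linarith [hU.1, hU.2]

/-- Over a finite field with an odd number `q` of elements, for each monic
irreducible `P` of odd degree and `x ∈ {-1,0,1}` set
`h_P(x) = log(N(P))·x/(N(P) − x)` with `N(P) = q^(deg P)`. Then for every real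
`α` and `ε > 0` there is a choice `(x_P)` with values in `{-1,0,1}` such that
`∑_P h_P(x_P)` converges and `|∑_P h_P(x_P) − α| < ε`. -/
theorem stmt_15 (F : Type) [Field F] [Fintype F] (q : ℕ) (hq : Fintype.card F = q)
    (hodd : Odd q) (α : ℝ) (ε : ℝ) (hε : 0 < ε) :
    ∃ x : {P : F[X] // P.Monic ∧ Irreducible P ∧ Odd P.natDegree} → ℤ,
      (∀ P, x P ∈ ({-1, 0, 1} : Set ℤ)) ∧
      Summable (fun P : {P : F[X] // P.Monic ∧ Irreducible P ∧ Odd P.natDegree} =>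
        Real.log ((q : ℝ) ^ P.1.natDegree) * (x P : ℝ) / ((q : ℝ) ^ P.1.natDegree - (x P : ℝ))) ∧
      |(∑' P : {P : F[X] // P.Monic ∧ Irreducible P ∧ Odd P.natDegree},
          Real.log ((q : ℝ) ^ P.1.natDegree) * (x P : ℝ) / ((q : ℝ) ^ P.1.natDegree - (x P : ℝ)))
        - α| < ε :=
  stmt_15_general F q hq α ε hε
end

section
/- Let q be a prime power and n ≥ 1, m ≥ 1 integers. Then for any integer r ≥ 1 and for q^n ≥ e^{4r}, one has ∑_{f monic, deg f > rn} (2 log N(f))^{2r} / N(f)^2 ≤ (2r)^{2r} · log^{2r}(q^n) / ((q^{1/2}−1) · q^{rn}). -/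
open Polynomial

-- count monic polynomials of degree d
lemma card_monic_le (F : Type) [Field F] [Fintype F] (d : ℕ) (u : Finset (Polynomial F))
    (hu : ∀ p ∈ u, p.Monic ∧ p.natDegree = d) : u.card ≤ Fintype.card F ^ d := by
  classical
  have h : u.card ≤ (Finset.univ : Finset (Fin d → F)).card := by
    apply Finset.card_le_card_of_injOn (fun p (i : Fin d) => p.coeff i)
      (fun _ _ => Finset.mem_univ _)
    intro p hp p' hp' h
    obtain ⟨hm, hdeg⟩ := hu p hp
    obtain ⟨hm', hdeg'⟩ := hu p' hp'
    ext i
    rcases lt_trichotomy i d with hi | hi | hi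
    · exact congrFun h ⟨i, hi⟩
    · have h1 : p.coeff i = 1 := by rw [hi, ← hdeg]; exact hm.coeff_natDegree
      have h2 : p'.coeff i = 1 := by rw [hi, ← hdeg']; exact hm'.coeff_natDegree
      rw [h1, h2]
    · rw [coeff_eq_zero_of_natDegree_lt (hdeg ▸ hi), coeff_eq_zero_of_natDegree_lt (hdeg' ▸ hi)]
  simpa using h

-- geometric tail bound
lemma geom_tail (x : ℝ) (hx0 : 0 < x) (hx1 : x < 1) (k : ℕ) (t : Finset ℕ)
    (ht : ∀ d ∈ t, k < d) : ∑ d ∈ t, x ^ d ≤ x ^ (k + 1) / (1 - x) := by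
  classical
  have hinj : ∀ a ∈ t, ∀ b ∈ t, a - (k+1) = b - (k+1) → a = b := by
    intro a ha b hb hab
    have := ht a ha; have := ht b hb; omega
  have h1 : ∑ j ∈ t.image (fun d => d - (k+1)), x ^ (k + 1 + j) = ∑ d ∈ t, x ^ d := by
    rw [Finset.sum_image hinj]
    apply Finset.sum_congr rfl
    intro d hd
    congr 1
    have := ht d hd; omega
  rw [← h1]
  have hsum : Summable (fun j : ℕ => x ^ (k + 1 + j)) := by
    simp_rw [pow_add]
    exact (summable_geometric_of_lt_one hx0.le hx1).mul_left _
  calc ∑ j ∈ t.image (fun d => d - (k+1)), x ^ (k + 1 + j)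
      ≤ ∑' j : ℕ, x ^ (k + 1 + j) := by
        apply Summable.sum_le_tsum _ (fun j _ => by positivity) hsum
    _ = x ^ (k + 1) * (1 - x)⁻¹ := by
        simp_rw [pow_add]
        rw [tsum_mul_left, tsum_geometric_of_lt_one hx0.le hx1]
    _ = x ^ (k + 1) / (1 - x) := by ring

-- key monotonicity inequality
lemma key_ineq (L : ℝ) (hL : 0 < L) (r n d : ℕ) (hr : 1 ≤ r) (hn : 1 ≤ n)
    (h4 : (4:ℝ) ≤ n * L) (hd : r * n ≤ d) :
    (2 * d * L) ^ (2 * r) * Real.exp (L / 2) ^ (r * n)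
      ≤ (2 * (r * n) * L) ^ (2 * r) * Real.exp (L / 2) ^ d := by
  set k := r * n with hk
  have hcast : ((r:ℝ) * n) = (k:ℝ) := by push_cast [hk]; ring
  rw [show (2 * ((r:ℝ) * n) * L) = 2 * (k:ℝ) * L by rw [hcast]]
  have hk1 : 1 ≤ k := Nat.one_le_iff_ne_zero.mpr (by positivity)
  have hkR : (0:ℝ) < k := by exact_mod_cast hk1
  have hdR : (0:ℝ) < d := lt_of_lt_of_le hkR (by exact_mod_cast hd)
  have ht1 : (1:ℝ) ≤ (d:ℝ) / k := (one_le_div hkR).mpr (by exact_mod_cast hd)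
  have ht0 : (0:ℝ) < (d:ℝ) / k := by positivity
  -- (d/k)^(2r) ≤ exp((d-k)*L/2)
  have hmain : ((d:ℝ) / k) ^ (2 * r) ≤ Real.exp (((d:ℝ) - k) * (L / 2)) := by
    have hlog : Real.log ((d:ℝ)/k) ≤ (d:ℝ)/k - 1 := Real.log_le_sub_one_of_pos ht0
    have h2 : ((d:ℝ)/k) ^ (2*r) = Real.exp ((2*r : ℕ) * Real.log ((d:ℝ)/k)) := by
      rw [Real.exp_nat_mul, Real.exp_log ht0]
    rw [h2]
    apply Real.exp_le_exp.mpr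
    have hrn : (k:ℝ) = (r:ℝ) * n := by exact_mod_cast hk
    have hdk : (0:ℝ) ≤ (d:ℝ) - k := by
      have : (k:ℝ) ≤ d := by exact_mod_cast hd
      linarith
    have hstep : (2*r : ℕ) * Real.log ((d:ℝ)/k) ≤ 2 * r * (((d:ℝ) - k) / k) := by
      push_cast
      have h2r : (0:ℝ) ≤ 2 * r := by positivity
      have : Real.log ((d:ℝ)/k) ≤ ((d:ℝ) - k) / k := by
        rw [sub_div, div_self hkR.ne']
        linarith
      nlinarith
    refine hstep.trans ?_
    -- 2r (d-k)/k = 2(d-k)/n ≤ (d-k) L/2 since 4 ≤ nL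
    have hnR : (0:ℝ) < n := by exact_mod_cast hn
    have hrR : (0:ℝ) < r := by exact_mod_cast hr
    have e1 : 2 * (r:ℝ) * (((d:ℝ) - k) / k) = 2 * ((d:ℝ) - (k:ℝ)) / (n:ℝ) := by
      rw [hrn]; field_simp
    rw [e1, div_le_iff₀ hnR]
    nlinarith [mul_nonneg hdk (sub_nonneg.mpr h4)]
  have hE : ∀ m : ℕ, Real.exp (L/2) ^ m = Real.exp (m * (L/2)) :=
    fun m => (Real.exp_nat_mul _ m).symm
  rw [hE, hE]
  have h5 : (2*(d:ℝ)*L) ^ (2*r) = (2*(k:ℝ)*L)^(2*r) * ((d:ℝ)/k)^(2*r) := by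
    rw [← mul_pow]
    congr 1
    field_simp
  have h6 : Real.exp ((d:ℝ)*(L/2)) = Real.exp (((d:ℝ)-k)*(L/2)) * Real.exp ((k:ℝ)*(L/2)) := by
    rw [← Real.exp_add]; ring_nf
  rw [h5, h6]
  have hA : (0:ℝ) ≤ (2*(k:ℝ)*L)^(2*r) := by positivity
  have hB : (0:ℝ) ≤ Real.exp ((k:ℝ)*(L/2)) := (Real.exp_pos _).le
  nlinarith [mul_le_mul_of_nonneg_left (mul_le_mul_of_nonneg_right hmain hB) hA]

/-- For a finite field with `q` elements, integers `r, n ≥ 1` with `q^n ≥ e^(4r)`,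
`∑_{f monic, deg f > r·n} (2 log N(f))^(2r) / N(f)^2
  ≤ (2r)^(2r) · log^(2r)(q^n) / ((q^(1/2) − 1) · q^(r·n))`. -/
theorem stmt_17 (F : Type) [Field F] [Fintype F] (q : ℕ) (hq : Fintype.card F = q)
    (r n : ℕ) (hr : 1 ≤ r) (hn : 1 ≤ n)
    (hqn : Real.exp (4 * r) ≤ (q : ℝ) ^ n) :
    ∑' f : {f : F[X] // f.Monic ∧ r * n < f.natDegree},
        (2 * Real.log ((q : ℝ) ^ f.1.natDegree)) ^ (2 * r) / ((q : ℝ) ^ f.1.natDegree) ^ 2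
      ≤ ((2 * r : ℕ) : ℝ) ^ (2 * r) * (Real.log ((q : ℝ) ^ n)) ^ (2 * r)
          / (((q : ℝ) ^ ((1 : ℝ)/2) - 1) * (q : ℝ) ^ (r * n)) := by
  classical
  have hq2 : 1 < q := hq ▸ Fintype.one_lt_card
  have hqR : (1:ℝ) < q := by exact_mod_cast hq2
  have hq0 : (0:ℝ) < q := by linarith
  set L : ℝ := Real.log q with hLdef
  have hL : 0 < L := Real.log_pos hqR
  have h4 : (4:ℝ) ≤ n * L := by
    have h1 : (4:ℝ) * r ≤ Real.log ((q:ℝ) ^ n) := by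
      have := Real.log_le_log (Real.exp_pos _) hqn
      rwa [Real.log_exp] at this
    rw [Real.log_pow] at h1
    have hr1 : (1:ℝ) ≤ r := by exact_mod_cast hr
    nlinarith
  set E : ℝ := Real.exp (L / 2) with hEdef
  have hE1 : 1 < E := Real.one_lt_exp_iff.mpr (by positivity)
  have hE0 : 0 < E := by linarith
  have hEq : E ^ 2 = (q:ℝ) := by
    rw [hEdef, ← Real.exp_nat_mul, ← Real.exp_log hq0]
    congr 1
    rw [hLdef]
    push_cast
    ring
  have hQE : (q:ℝ) ^ ((1:ℝ)/2) = E := by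
    rw [Real.rpow_def_of_pos hq0, hEdef, ← hLdef]
    ring_nf
  set k := r * n with hk
  set x : ℝ := E⁻¹ with hxdef
  have hx0 : 0 < x := by positivity
  have hx1 : x < 1 := by
    rw [hxdef]
    exact inv_lt_one_of_one_lt₀ hE1
  -- rewrite RHS
  rw [hQE]
  have hqk : (q:ℝ) ^ k = E ^ (2 * k) := by rw [← hEq, ← pow_mul]
  set B : ℝ := (2 * (k:ℝ) * L) ^ (2 * r) * x ^ k with hBdef
  have hB0 : 0 ≤ B := by positivity
  have hRHS : ((2 * r : ℕ) : ℝ) ^ (2 * r) * (Real.log ((q : ℝ) ^ n)) ^ (2 * r)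
      / ((E - 1) * (q : ℝ) ^ k) = B * (x ^ (k + 1) / (1 - x)) := by
    rw [Real.log_pow, hBdef, hxdef, hqk]
    have h2 : ((2 * r : ℕ) : ℝ) ^ (2*r) * ((n:ℝ) * L) ^ (2*r) = (2 * (k:ℝ) * L) ^ (2*r) := by
      rw [← mul_pow]
      congr 1
      push_cast [hk]
      ring
    rw [← hLdef, ← h2]
    have hEne : E ≠ 0 := hE0.ne'
    have hEm1 : E - 1 ≠ 0 := by linarith
    have h1xne : 1 - E⁻¹ ≠ 0 := by
      have : E⁻¹ < 1 := inv_lt_one_of_one_lt₀ hE1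
      linarith
    rw [inv_pow, inv_pow]
    field_simp
    ring
  rw [hRHS]
  apply tsum_le_of_sum_le'
  · have : 0 ≤ x ^ (k+1) / (1 - x) := by
      apply div_nonneg (by positivity)
      linarith
    positivity
  intro s
  set G : F[X] → ℝ := fun p =>
    (2 * Real.log ((q : ℝ) ^ p.natDegree)) ^ (2 * r) / ((q : ℝ) ^ p.natDegree) ^ 2 with hGdef
  have hGnn : ∀ p, 0 ≤ G p := by
    intro p
    apply div_nonneg _ (by positivity)
    apply pow_nonneg
    have : 0 ≤ Real.log ((q:ℝ) ^ p.natDegree) := by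
      apply Real.log_nonneg
      apply one_le_pow₀ hqR.le
    linarith
  set s' : Finset F[X] := s.image Subtype.val with hs'
  have hstep1 : ∑ f ∈ s, G f.1 = ∑ p ∈ s', G p :=
    (Finset.sum_image (fun a _ b _ h => Subtype.ext h)).symm
  have hs'mem : ∀ p ∈ s', p.Monic ∧ k < p.natDegree := by
    intro p hp
    rw [hs'] at hp
    obtain ⟨f, _, rfl⟩ := Finset.mem_image.mp hp
    exact f.2
  set t : Finset ℕ := s'.image Polynomial.natDegree with ht
  have hstep2 : ∑ d ∈ t, ∑ p ∈ s'.filter (fun p => p.natDegree = d), G p = ∑ p ∈ s', G p :=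
    Finset.sum_fiberwise_of_maps_to (fun p hp => Finset.mem_image_of_mem _ hp) G
  have htk : ∀ d ∈ t, k < d := by
    intro d hd
    obtain ⟨p, hp, rfl⟩ := Finset.mem_image.mp hd
    exact (hs'mem p hp).2
  -- per-degree bound
  have hinner : ∀ d ∈ t, ∑ p ∈ s'.filter (fun p => p.natDegree = d), G p ≤ B * x ^ d := by
    intro d hd
    have hdk : k < d := htk d hd
    set u := s'.filter (fun p => p.natDegree = d) with hu
    have hu' : ∀ p ∈ u, p.Monic ∧ p.natDegree = d := by
      intro p hp
      rw [hu, Finset.mem_filter] at hp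
      exact ⟨(hs'mem p hp.1).1, hp.2⟩
    have hconst : ∀ p ∈ u, G p = (2 * (d:ℝ) * L) ^ (2 * r) / ((q:ℝ) ^ d) ^ 2 := by
      intro p hp
      rw [hGdef]
      simp only [(hu' p hp).2, Real.log_pow, ← hLdef]
      ring_nf
    rw [Finset.sum_congr rfl hconst, Finset.sum_const, nsmul_eq_mul]
    have hcard : (u.card : ℝ) ≤ (q:ℝ) ^ d := by
      have := card_monic_le F d u hu'
      rw [hq] at this
      exact_mod_cast this
    have ha : 0 ≤ (2 * (d:ℝ) * L) ^ (2 * r) / ((q:ℝ) ^ d) ^ 2 := by positivity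
    calc (u.card : ℝ) * ((2 * (d:ℝ) * L) ^ (2 * r) / ((q:ℝ) ^ d) ^ 2)
        ≤ (q:ℝ) ^ d * ((2 * (d:ℝ) * L) ^ (2 * r) / ((q:ℝ) ^ d) ^ 2) :=
          mul_le_mul_of_nonneg_right hcard ha
      _ = (2 * (d:ℝ) * L) ^ (2 * r) / (q:ℝ) ^ d := by
          field_simp
      _ ≤ B * x ^ d := by
          rw [hBdef, hxdef, ← hEq, ← pow_mul]
          have hkey := key_ineq L hL r n d hr hn h4 (le_of_lt hdk)
          rw [← hEdef] at hkey
          have hkcast : ((r:ℝ) * n) = (k:ℝ) := by push_cast [hk]; ring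
          rw [hkcast] at hkey
          have hEne : E ≠ 0 := hE0.ne'
          have h7 : (2 * (d:ℝ) * L) ^ (2 * r) / E ^ (2 * d)
              = ((2 * (d:ℝ) * L) ^ (2 * r) * E ^ k) / (E ^ k * E ^ (2 * d)) := by
            field_simp
          have h8 : (2 * (k:ℝ) * L) ^ (2 * r) * E⁻¹ ^ k * E⁻¹ ^ d
              = ((2 * (k:ℝ) * L) ^ (2 * r) * E ^ d) / (E ^ k * E ^ (2 * d)) := by
            rw [inv_pow, inv_pow]
            field_simp
            ring
          rw [h7, h8]
          have hC : (0:ℝ) < E ^ k * E ^ (2 * d) := by positivity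
          rw [div_le_div_iff₀ hC hC]
          exact mul_le_mul_of_nonneg_right hkey hC.le
  calc ∑ f ∈ s, G f.1 = ∑ d ∈ t, ∑ p ∈ s'.filter (fun p => p.natDegree = d), G p := by
        rw [hstep2, hstep1]
    _ ≤ ∑ d ∈ t, B * x ^ d := Finset.sum_le_sum hinner
    _ = B * ∑ d ∈ t, x ^ d := by rw [Finset.mul_sum]
    _ ≤ B * (x ^ (k + 1) / (1 - x)) :=
        mul_le_mul_of_nonneg_left (geom_tail x hx0 hx1 k t htk) hB0
end
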